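/- arXiv:2011.03035 — 5 statements merged into one kernel-verified Lean document; each statement's English description precedes it below -/
import Mathlib

section
/- Let D be a presentable category and C a locally small complete category. A functor F : D^op → C preserves limits if and only if F admits a left adjoint. -/
/-!
Dualising, `F` preserves limits iff `F.rightOp : D ⥤ Cᵒᵖ` preserves colimits. Exhibit `D` as a
reflective subcategory `R : D ⥤ Psh(S)` with reflector `L`. Then `L ⋙ F.rightOp` is a
colimit-preserving functor out of a presheaf category into the cocomplete `Cᵒᵖ`, hence a left
adjoint, say with right adjoint `G`. As `L` inverts the unit `η`, so does `L ⋙ F.rightOp`, which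
makes every `η (G Y)` a split mono; so `G` lands in the reflective subcategory, and `G ⋙ L` is
right adjoint to `F.rightOp`.
-/

open CategoryTheory CategoryTheory.Limits

universe v u w

/-- A 1-categorical stand-in for presentability: `D` is presentable if it is a
reflective full subcategory of a presheaf category on a small category. -/
def IsPresentableCat (D : Type u) [Category.{v} D] : Prop :=
  ∃ (S : Type v) (_ : SmallCategory S) (R : D ⥤ (Sᵒᵖ ⥤ Type v)),
    R.Full ∧ R.Faithful ∧ R.IsRightAdjoint

namespace CategoryTheory

variable {D P E : Type*} [Category D] [Category P] [Category E] {R : D ⥤ P} [Reflective R]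
  {H : D ⥤ E} {G : E ⥤ P}

namespace Adjunction

theorem mem_essImage_of_reflector_comp (adj : reflector R ⋙ H ⊣ G) (Y : E) :
    R.essImage (G.obj Y) := by
  let η := (reflectorAdjunction R).unit.app (G.obj Y)
  have : IsIso ((reflector R ⋙ H).map η) := inferInstanceAs (IsIso (H.map ((reflector R).map η)))
  have : IsSplitMono η := IsSplitMono.mk'
    ⟨adj.homEquiv _ Y (inv ((reflector R ⋙ H).map η) ≫ adj.counit.app Y), by
      rw [← adj.homEquiv_naturality_left, IsIso.hom_inv_id_assoc]
      simp [adj.homEquiv_unit]⟩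
  exact mem_essImage_of_unit_isSplitMono

noncomputable def ofReflectorComp (adj : reflector R ⋙ H ⊣ G) : H ⊣ G ⋙ reflector R :=
  have : ∀ Y, IsIso ((G.whiskerLeft (reflectorAdjunction R).unit).app Y) := fun Y =>
    (adj.mem_essImage_of_reflector_comp Y).unit_isIso
  have : IsIso (G.whiskerLeft (reflectorAdjunction R).unit) := NatIso.isIso_of_isIso_app _
  adj.restrictFullyFaithful R.fullyFaithfulOfReflective (Functor.FullyFaithful.id _)
    (Functor.isoWhiskerRight (asIso (reflectorAdjunction R).counit) H)
    (asIso (G.whiskerLeft (reflectorAdjunction R).unit))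

end Adjunction

variable (R H) in
theorem Functor.isLeftAdjoint_of_reflector_comp [(reflector R ⋙ H).IsLeftAdjoint] :
    H.IsLeftAdjoint :=
  ⟨_, ⟨(Adjunction.ofIsLeftAdjoint (reflector R ⋙ H)).ofReflectorComp⟩⟩

end CategoryTheory

/-- Let `D` be a presentable category and `C` a locally small complete category.
A functor `F : Dᵒᵖ ⥤ C` preserves limits iff it admits a left adjoint
(i.e. `F` is a right adjoint). -/
theorem stmt0 {D : Type u} [Category.{v} D] {C : Type w} [Category.{v} C]
    (hD : IsPresentableCat D) [HasLimitsOfSize.{v, v} C]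
    (F : Dᵒᵖ ⥤ C) :
    PreservesLimitsOfSize.{v, v} F ↔ F.IsRightAdjoint := by
  refine ⟨fun _ => ?_, fun _ => (Adjunction.ofIsRightAdjoint F).rightAdjoint_preservesLimits⟩
  obtain ⟨S, _, R, _, _, _⟩ := hD
  let : Reflective R := { L := R.leftAdjoint, adj := .ofIsRightAdjoint R }
  have := preservesColimitsOfSize_rightOp F
  have := (reflectorAdjunction R).leftAdjoint_preservesColimits
  have := Presheaf.isLeftAdjoint_of_preservesColimits.{0} (reflector R ⋙ F.rightOp)
  have := Functor.isLeftAdjoint_of_reflector_comp R F.rightOp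
  exact ⟨_, ⟨(Adjunction.ofIsLeftAdjoint F.rightOp).rightOp⟩⟩
end

section
/- Let C be a complete, locally small category. The category of limit-preserving functors from Set^op to C is equivalent to C itself, via evaluation at the singleton set. -/
/-!
Every set `S` is the `S`-fold coproduct of the point, so `op S` is the `S`-fold power of `op *`
in `Setᵒᵖ`, and a product-preserving `F : Setᵒᵖ ⥤ C` satisfies `F S ≅ F(*)^S`, naturally in `S`
and `F`. Conversely `S ↦ X^S` preserves limits, being the opposite of the left adjoint of
`Hom(-, X)`, and its value at `*` is `X`. So `X ↦ (S ↦ X^S)` is inverse to evaluation at `*`.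
-/

open CategoryTheory CategoryTheory.Limits Opposite

universe v u

namespace CategoryTheory.Limits.Types

def cofanPUnit (S : Type v) : Cofan fun _ : S => PUnit.{v + 1} :=
  Cofan.mk S fun s => ↾fun _ => s

def isColimitCofanPUnit (S : Type v) : IsColimit (cofanPUnit S) :=
  Cofan.IsColimit.mk _ (fun c => ↾fun s => c.inj s PUnit.unit)
    (fun _ _ => by ext ⟨⟩; rfl)
    (fun _ _ hm => by ext s; exact ConcreteCategory.congr_hom (hm s) PUnit.unit)

end CategoryTheory.Limits.Types

noncomputable section

variable {C : Type u} [Category.{v} C] [HasProducts.{v} C]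

instance preservesLimitsOfSize_piConst_obj (X : C) :
    PreservesLimitsOfSize.{v, v} (piConst.obj X) :=
  have := (piConstAdj X).leftAdjoint_preservesColimits
  preservesLimitsOfSize_of_rightOp _

def piConstCompEvaluationIso : piConst ⋙ (evaluation _ C).obj (op PUnit.{v + 1}) ≅ 𝟭 C :=
  NatIso.ofComponents (fun _ => productUniqueIso _) (by intros; simp)

def toEvaluationCompPiConst :
    𝟭 ((Type v)ᵒᵖ ⥤ C) ⟶ (evaluation _ C).obj (op PUnit.{v + 1}) ⋙ piConst where
  app F :=
    { app S := Pi.lift fun s => F.map (↾fun _ : PUnit => s).op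
      naturality S T f := by
        refine Pi.hom_ext _ _ fun t => ?_
        simp only [Functor.id_obj, Functor.comp_obj, evaluation_obj_obj, piConst_obj_obj,
          piConst_obj_map, Category.assoc, Pi.lift_π, Pi.map'_comp_π,
          Category.comp_id]
        rw [← F.map_comp]
        rfl }
  naturality F G α := by
    ext S : 2
    refine Pi.hom_ext _ _ fun s => ?_
    simp

theorem isIso_toEvaluationCompPiConst_app (F : (Type v)ᵒᵖ ⥤ C)
    [∀ S : Type v, PreservesLimitsOfShape (Discrete S) F] :
    IsIso (toEvaluationCompPiConst.app F) := by
  have (S : (Type v)ᵒᵖ) : IsIso ((toEvaluationCompPiConst.app F).app S) := by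
    have hS := isLimitFanMkObjOfIsLimit F (fun _ : S.unop => op PUnit)
      (fun s => (↾fun _ : PUnit => s).op) (Cofan.IsColimit.op (Types.isColimitCofanPUnit S.unop))
    -- definitionally, the component at `S` is the comparison map between two limit fans
    exact (hS.conePointUniqueUpToIso
      (limit.isLimit (Discrete.functor fun _ : S.unop => F.obj (op PUnit)))).isIso_hom
  exact NatIso.isIso_of_isIso_app _

theorem isEquivalence_ι_comp_evaluation_pUnit (P : ObjectProperty ((Type v)ᵒᵖ ⥤ C))
    (hP : ∀ F, P F → ∀ S : Type v, PreservesLimitsOfShape (Discrete S) F)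
    (hpiConst : ∀ X, P (piConst.obj X)) :
    (P.ι ⋙ (evaluation _ C).obj (op PUnit.{v + 1})).IsEquivalence := by
  have : IsIso (Functor.whiskerLeft P.ι toEvaluationCompPiConst) :=
    have (F : P.FullSubcategory) :
        IsIso ((Functor.whiskerLeft P.ι toEvaluationCompPiConst).app F) :=
      have := hP _ F.property
      isIso_toEvaluationCompPiConst_app F.obj
    NatIso.isIso_of_isIso_app _
  exact Functor.IsEquivalence.mk' (P.lift piConst hpiConst)
    ((P.fullyFaithfulι.whiskeringRight _).preimageIso
      (asIso (Functor.whiskerLeft P.ι toEvaluationCompPiConst)))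
    piConstCompEvaluationIso

end

/-- Let `C` be a complete, locally small category. The category `Set(C)` of
internal `Set`-objects in `C` (the full subcategory of `Funct(Setᵒᵖ, C)` on the
limit-preserving functors) is equivalent to `C` itself, via evaluation at the
singleton set. -/
theorem stmt1 {C : Type u} [Category.{v} C] [HasLimitsOfSize.{v, v} C] :
    (ObjectProperty.ι (fun F : (Type v)ᵒᵖ ⥤ C => PreservesLimitsOfSize.{v, v} F) ⋙
      (evaluation (Type v)ᵒᵖ C).obj (Opposite.op PUnit)).IsEquivalence :=
  isEquivalence_ι_comp_evaluation_pUnit _ (fun _ _ _ => inferInstance) fun _ => inferInstance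
end

section
/- Let G : M → M' be a colimit-preserving symmetric monoidal functor between presentable symmetric monoidal categories, with lax symmetric monoidal right adjoint G^R. For an M-algebroid C and an M'-algebroid D, there is an equivalence of M-algebroids Funct(C, (G^R)_! D) ≃ (G^R)_! Funct(G_! C, D), natural in C and D. -/
open CategoryTheory CategoryTheory.Limits CategoryTheory.MonoidalCategory

universe v u v' u'

/-!
For fixed `c`, `R ⋙ ihom c` is right adjoint to `tensorLeft c ⋙ F` and `ihom (F c) ⋙ R` is right
adjoint to `F ⋙ tensorLeft (F c)`. The monoidal structure `F c ⊗ F x ≅ F (c ⊗ x)` identifies the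
two left adjoints, so its conjugate identifies the right adjoints. Naturality in `c` holds because
conjugation is functorial and commutes with whiskering, and `μ` is natural.
-/

namespace CategoryTheory

section

variable {C : Type*} {D : Type*} {E : Type*} {E' : Type*}
  [Category* C] [Category* D] [Category* E] [Category* E']

def Functor.uncurryObjCompWhiskeringRightIso (G : C ⥤ D ⥤ E) (H : E ⥤ E') :
    uncurry.obj (G ⋙ (whiskeringRight D E E').obj H) ≅ uncurry.obj G ⋙ H :=
  NatIso.ofComponents (fun _ => Iso.refl _) (by cat_disch)

end

variable {A : Type u} [Category.{v} A] [MonoidalCategory A]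
  {B : Type u'} [Category.{v'} B] [MonoidalCategory B] (F : A ⥤ B) [F.Monoidal]

lemma Functor.Monoidal.commTensorLeft_hom_naturality {c' c : A} (f : c' ⟶ c) :
    (commTensorLeft F c').hom ≫ Functor.whiskerRight ((tensoringLeft A).map f) F =
      Functor.whiskerLeft F ((tensoringLeft B).map (F.map f)) ≫ (commTensorLeft F c).hom := by
  ext X
  simp [Functor.LaxMonoidal.μ_natural_left]

namespace MonoidalClosed

variable [MonoidalClosed A] [MonoidalClosed B] {R : B ⥤ A} (adj : F ⊣ R)

def rightAdjointCompIhomIso (c : A) : R ⋙ ihom c ≅ ihom (F.obj c) ⋙ R :=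
  conjugateIsoEquiv ((ihom.adjunction c).comp adj) (adj.comp (ihom.adjunction (F.obj c)))
    (Functor.Monoidal.commTensorLeft F c)

lemma whiskerLeft_pre_comp_rightAdjointCompIhomIso_hom {c' c : A} (f : c' ⟶ c) :
    Functor.whiskerLeft R (pre f) ≫ (rightAdjointCompIhomIso F adj c').hom =
      (rightAdjointCompIhomIso F adj c).hom ≫ Functor.whiskerRight (pre (F.map f)) R := by
  rw [pre, pre, ← conjugateEquiv_whiskerRight _ _ adj, ← conjugateEquiv_whiskerLeft _ _ adj]
  simp only [rightAdjointCompIhomIso, conjugateIsoEquiv_apply_hom, conjugateEquiv_comp,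
    Functor.Monoidal.commTensorLeft_hom_naturality]

def rightAdjointCompInternalHomIso :
    internalHom ⋙ (Functor.whiskeringLeft B A A).obj R ≅
      F.op ⋙ internalHom ⋙ (Functor.whiskeringRight B B A).obj R :=
  NatIso.ofComponents (fun c => rightAdjointCompIhomIso F adj c.unop)
    (fun f => whiskerLeft_pre_comp_rightAdjointCompIhomIso_hom F adj f.unop)

end MonoidalClosed

end CategoryTheory

/-- `A`, `B`, `F`, `R` and `internalHom` stand for `Algbrd(M)`, `Algbrd(M')`, `G_!`, `(G^R)_!` and
`Funct`. -/
theorem stmt13_general {A : Type u} [Category.{v} A] [MonoidalCategory A]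
    [MonoidalClosed A]
    {B : Type u'} [Category.{v'} B] [MonoidalCategory B]
    [MonoidalClosed B]
    (F : A ⥤ B) [F.Monoidal] (R : B ⥤ A) (adj : F ⊣ R) :
    Nonempty
      (((Functor.id Aᵒᵖ).prod R ⋙ Functor.uncurry.obj MonoidalClosed.internalHom) ≅
        (F.op.prod (Functor.id B) ⋙ Functor.uncurry.obj MonoidalClosed.internalHom ⋙ R)) :=
  ⟨Functor.uncurry.mapIso (MonoidalClosed.rightAdjointCompInternalHomIso F adj) ≪≫
    Functor.uncurryObjCompWhiskeringRightIso (F.op ⋙ MonoidalClosed.internalHom) R⟩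

/-- Let `G : M → M'` be a colimit-preserving symmetric monoidal functor
between presentable symmetric monoidal categories, with lax symmetric monoidal
right adjoint `G^R`.  Then for an `M`-algebroid `C` and an `M'`-algebroid `D`
there is an equivalence of `M`-algebroids
`Funct(C, (G^R)_! D) ≃ (G^R)_! Funct(G_! C, D)`, natural in `C` and `D`.

We formalize this at the level of the closed symmetric monoidal categories
`𝒜 = Algbrd(M)` and `ℬ = Algbrd(M')` (which are presentable symmetric
monoidal, with internal Homs `Funct`): given a strong symmetric monoidal left
adjoint `F = G_! : 𝒜 ⥤ ℬ` with right adjoint `R = (G^R)_!`, the two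
bifunctors `(C, D) ↦ Funct(C, R D)` and `(C, D) ↦ R (Funct(F C, D))` from
`𝒜ᵒᵖ × ℬ` to `𝒜` are naturally isomorphic. -/
theorem stmt13 {A : Type u} [Category.{v} A] [MonoidalCategory A] [SymmetricCategory A]
    [MonoidalClosed A] [HasLimits A] [HasColimits A]
    {B : Type u'} [Category.{v'} B] [MonoidalCategory B] [SymmetricCategory B]
    [MonoidalClosed B] [HasLimits B] [HasColimits B]
    (F : A ⥤ B) [F.Monoidal] [PreservesColimits F] (R : B ⥤ A) (adj : F ⊣ R) :
    Nonempty
      (((Functor.id Aᵒᵖ).prod R ⋙ Functor.uncurry.obj MonoidalClosed.internalHom) ≅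
        (F.op.prod (Functor.id B) ⋙ Functor.uncurry.obj MonoidalClosed.internalHom ⋙ R)) :=
  stmt13_general F R adj
end

section
/- Let i : M → M' be a fully faithful lax symmetric monoidal functor between presentable symmetric monoidal categories whose left adjoint i^L is strictly symmetric monoidal. Then for any M'-algebroid C and any M-algebroid D, the functor algebroid Funct(C, i_! D) lies in the essential image of i_! : Algbrd(M) → Algbrd(M'). -/
open CategoryTheory CategoryTheory.Limits CategoryTheory.MonoidalCategory

universe v u v' u'

theorem stmt14_general {A : Type u} [Category.{v} A] [MonoidalCategory A]
    {B : Type u'} [Category.{v'} B] [MonoidalCategory B] [SymmetricCategory B]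
    [MonoidalClosed B]
    (i : A ⥤ B) [i.Full] [i.Faithful] (L : B ⥤ A) [L.Monoidal] (adj : L ⊣ i)
    (C : B) (D : A) :
    i.essImage ((ihom C).obj (i.obj D)) :=
  -- The unit is invertible at `[C, i D]` by Day's reflection theorem
  -- (`Monoidal.Reflective.isIso_tfae`), since `L` is strong monoidal.
  adj.mem_essImage_of_unit_isIso _

/-- Let `i : M → M'` be a fully faithful lax symmetric monoidal functor
between presentable symmetric monoidal categories, whose left adjoint `i^L` is
strictly symmetric monoidal.  Then for any `M'`-algebroid `C` and any
`M`-algebroid `D`, the functor algebroid `Funct(C, i_! D)` lies in the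
essential image of `i_! : Algbrd(M) → Algbrd(M')`.

We formalize this at the level of the closed symmetric monoidal categories
`𝒜 = Algbrd(M)` and `ℬ = Algbrd(M')`: given the induced fully faithful
functor `i = i_! : 𝒜 ⥤ ℬ` with strong symmetric monoidal left adjoint
`L = (i^L)_!`, the internal Hom `Funct(C, i D) = (ihom C).obj (i.obj D)` lies
in the essential image of `i` for every `C : ℬ` and `D : 𝒜`. -/
theorem stmt14 {A : Type u} [Category.{v} A] [MonoidalCategory A] [SymmetricCategory A]
    [MonoidalClosed A] [HasLimits A] [HasColimits A]
    {B : Type u'} [Category.{v'} B] [MonoidalCategory B] [SymmetricCategory B]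
    [MonoidalClosed B] [HasLimits B] [HasColimits B]
    (i : A ⥤ B) [i.Full] [i.Faithful] (L : B ⥤ A) [L.Monoidal] (adj : L ⊣ i)
    (C : B) (D : A) :
    i.essImage ((ihom C).obj (i.obj D)) :=
  stmt14_general i L adj C D
end

section
/- Let M be a category admitting finite products, regarded as a cartesian symmetric monoidal category. Then the induced symmetric monoidal structure on the category Algbrd(M) of M-algebroids is cartesian: the unit algebroid is terminal, and for algebroids A, B the projections exhibit A ⊗ B as the categorical product A × B. -/
open CategoryTheory CategoryTheory.Limits CategoryTheory.MonoidalCategory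

universe v u w

attribute [local instance] CategoryTheory.CartesianMonoidalCategory.ofHasFiniteProducts

/-!
In a cartesian monoidal category a morphism into `𝟙_ V` is unique and a morphism into `P ⊗ Q`
is the pair of its two components. Hence the algebroid on one object with all Hom objects
terminal receives exactly one enriched functor from every algebroid, and on the algebroid with
Hom objects `A(x', x) ⊗ B(y', y)`, whose identities and compositions are taken componentwise,
an enriched functor is the same as a pair of enriched functors into `A` and `B`: the functor
axioms for the pairing hold because they hold after each projection.
-/

namespace CategoryTheory

section GeneralizedElements

variable (V : Type u) [Category.{v} V] [MonoidalCategory V]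
  {C : Type*} [EnrichedCategory V C] {W₁ W₂ W₃ : V} {a b c d : C}

theorem e_id_comp_tensorHom (g : W₁ ⟶ (a ⟶[V] b)) :
    (λ_ W₁).inv ≫ (eId V a ⊗ₘ g) ≫ eComp V a a b = g := by
  rw [leftUnitor_inv_comp_tensorHom_assoc, e_id_comp, Category.comp_id]

theorem e_comp_id_tensorHom (g : W₁ ⟶ (a ⟶[V] b)) :
    (ρ_ W₁).inv ≫ (g ⊗ₘ eId V b) ≫ eComp V a b b = g := by
  rw [rightUnitor_inv_comp_tensorHom_assoc, e_comp_id, Category.comp_id]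

theorem e_assoc_tensorHom
    (f₁ : W₁ ⟶ (a ⟶[V] b)) (f₂ : W₂ ⟶ (b ⟶[V] c)) (f₃ : W₃ ⟶ (c ⟶[V] d)) :
    (α_ W₁ W₂ W₃).inv ≫ (((f₁ ⊗ₘ f₂) ≫ eComp V a b c) ⊗ₘ f₃) ≫ eComp V a c d =
      (f₁ ⊗ₘ ((f₂ ⊗ₘ f₃) ≫ eComp V b c d)) ≫ eComp V a b d := by
  rw [← tensorHom_comp_whiskerRight, ← tensorHom_comp_whiskerLeft, Category.assoc,
    Category.assoc, ← associator_inv_naturality_assoc, e_assoc]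

end GeneralizedElements

open CartesianMonoidalCategory

variable {V : Type u} [Category.{v} V] [CartesianMonoidalCategory V]

instance EnrichedCategory.punit : EnrichedCategory V PUnit where
  Hom _ _ := 𝟙_ V
  id _ := 𝟙 _
  comp _ _ _ := (λ_ _).hom
  id_comp _ _ := toUnit_unique _ _
  comp_id _ _ := toUnit_unique _ _
  assoc _ _ _ _ := toUnit_unique _ _

instance EnrichedFunctor.uniqueToPUnit (Z : Type*) [EnrichedCategory V Z] :
    Unique (EnrichedFunctor V Z PUnit) where
  default :=
    { obj _ := PUnit.unit
      map _ _ := toUnit _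
      map_id _ := toUnit_unique _ _
      map_comp _ _ _ := toUnit_unique _ _ }
  uniq _ := EnrichedFunctor.ext V (fun _ => rfl) (fun _ _ => toUnit_unique _ _)

section Prod

variable {X : Type*} [EnrichedCategory V X] {Y : Type*} [EnrichedCategory V Y]

instance EnrichedCategory.prod : EnrichedCategory V (X × Y) where
  Hom p q := (p.1 ⟶[V] q.1) ⊗ (p.2 ⟶[V] q.2)
  id p := lift (eId V p.1) (eId V p.2)
  comp p q r :=
    lift ((fst (p.1 ⟶[V] q.1) (p.2 ⟶[V] q.2) ⊗ₘ fst (q.1 ⟶[V] r.1) (q.2 ⟶[V] r.2)) ≫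
        eComp V p.1 q.1 r.1)
      ((snd (p.1 ⟶[V] q.1) (p.2 ⟶[V] q.2) ⊗ₘ snd (q.1 ⟶[V] r.1) (q.2 ⟶[V] r.2)) ≫
        eComp V p.2 q.2 r.2)
  id_comp p q := by
    ext <;> simp only [Category.assoc, lift_fst, lift_snd, ← tensorHom_id,
      tensorHom_comp_tensorHom_assoc, Category.id_comp, e_id_comp_tensorHom]
  comp_id p q := by
    ext <;> simp only [Category.assoc, lift_fst, lift_snd, ← id_tensorHom,
      tensorHom_comp_tensorHom_assoc, Category.id_comp, e_comp_id_tensorHom]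
  assoc p q r s := by
    ext <;> simp only [Category.assoc, lift_fst, lift_snd, ← tensorHom_id, ← id_tensorHom,
      tensorHom_comp_tensorHom_assoc, Category.id_comp, e_assoc_tensorHom]

@[simp]
theorem EnrichedCategory.prod_eId_fst (x : X) (y : Y) :
    eId V (x, y) ≫ fst (x ⟶[V] x) (y ⟶[V] y) = eId V x := lift_fst _ _

@[simp]
theorem EnrichedCategory.prod_eId_snd (x : X) (y : Y) :
    eId V (x, y) ≫ snd (x ⟶[V] x) (y ⟶[V] y) = eId V y := lift_snd _ _

@[simp]
theorem EnrichedCategory.prod_eComp_fst (x₁ x₂ x₃ : X) (y₁ y₂ y₃ : Y) :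
    eComp V (x₁, y₁) (x₂, y₂) (x₃, y₃) ≫ fst (x₁ ⟶[V] x₃) (y₁ ⟶[V] y₃) =
      (fst (x₁ ⟶[V] x₂) (y₁ ⟶[V] y₂) ⊗ₘ fst (x₂ ⟶[V] x₃) (y₂ ⟶[V] y₃)) ≫
        eComp V x₁ x₂ x₃ :=
  lift_fst _ _

@[simp]
theorem EnrichedCategory.prod_eComp_snd (x₁ x₂ x₃ : X) (y₁ y₂ y₃ : Y) :
    eComp V (x₁, y₁) (x₂, y₂) (x₃, y₃) ≫ snd (x₁ ⟶[V] x₃) (y₁ ⟶[V] y₃) =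
      (snd (x₁ ⟶[V] x₂) (y₁ ⟶[V] y₂) ⊗ₘ snd (x₂ ⟶[V] x₃) (y₂ ⟶[V] y₃)) ≫
        eComp V y₁ y₂ y₃ :=
  lift_snd _ _

namespace EnrichedFunctor

variable (V X Y) in
def fst : EnrichedFunctor V (X × Y) X where
  obj p := p.1
  map _ _ := CartesianMonoidalCategory.fst _ _

variable (V X Y) in
def snd : EnrichedFunctor V (X × Y) Y where
  obj p := p.2
  map _ _ := CartesianMonoidalCategory.snd _ _

variable {Z : Type*} [EnrichedCategory V Z]

def prod' (F : EnrichedFunctor V Z X) (G : EnrichedFunctor V Z Y) :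
    EnrichedFunctor V Z (X × Y) where
  obj z := (F.obj z, G.obj z)
  map z z' := lift (F.map z z') (G.map z z')
  map_id z := by apply CartesianMonoidalCategory.hom_ext <;> simp
  map_comp z z' z'' := by apply CartesianMonoidalCategory.hom_ext <;> simp

@[simp]
theorem prod'_comp_fst (F : EnrichedFunctor V Z X) (G : EnrichedFunctor V Z Y) :
    (F.prod' G).comp V (fst V X Y) = F :=
  ext V (fun _ => rfl) (fun _ _ => (Category.comp_id _).trans (lift_fst _ _))

@[simp]
theorem prod'_comp_snd (F : EnrichedFunctor V Z X) (G : EnrichedFunctor V Z Y) :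
    (F.prod' G).comp V (snd V X Y) = G :=
  ext V (fun _ => rfl) (fun _ _ => (Category.comp_id _).trans (lift_snd _ _))

theorem prod'_comp_fst_comp_snd (H : EnrichedFunctor V Z (X × Y)) :
    (H.comp V (fst V X Y)).prod' (H.comp V (snd V X Y)) = H :=
  ext V (fun _ => rfl) (fun _ _ => (Category.comp_id _).trans (lift_comp_fst_snd _))

end EnrichedFunctor

end Prod

end CategoryTheory

/-- Let `M` be a category admitting finite products, regarded as a cartesian
symmetric monoidal category.  Then the induced symmetric monoidal structure on
the category `Algbrd(M)` of `M`-algebroids is cartesian: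

* the unit algebroid (the unit algebra on one object) is terminal: every
  `M`-algebroid admits a unique `M`-functor to it; and
* for `M`-algebroids `A, B` (with object types `X, Y`), the tensor product
  `A ⊗ B` — the algebroid with objects `X × Y` and Hom-objects
  `(A ⊗ B)((x',y'),(x,y)) = A(x',x) ⊗ B(y',y)` — together with the projection
  `M`-functors to `A` and `B`, is the categorical product of `A` and `B`. -/
theorem stmt16 {M : Type u} [Category.{v} M] [HasFiniteProducts M]
    {X Y : Type w} [A : EnrichedCategory M X] [B : EnrichedCategory M Y] :
    (∃ instU : EnrichedCategory M PUnit,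
      (∀ a b : PUnit, @EnrichedCategory.Hom M _ _ PUnit instU a b = 𝟙_ M) ∧
      ∀ (Z : Type w) (instZ : EnrichedCategory M Z),
        ∃! _F : @EnrichedFunctor M _ _ Z instZ PUnit instU, True) ∧
    (∃ (instP : EnrichedCategory M (X × Y))
       (pX : @EnrichedFunctor M _ _ (X × Y) instP X A)
       (pY : @EnrichedFunctor M _ _ (X × Y) instP Y B),
      (∀ p q : X × Y,
        @EnrichedCategory.Hom M _ _ (X × Y) instP p q =
          (p.1 ⟶[M] q.1) ⊗ (p.2 ⟶[M] q.2)) ∧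
      ∀ (Z : Type w) (instZ : EnrichedCategory M Z)
        (F : @EnrichedFunctor M _ _ Z instZ X A) (G : @EnrichedFunctor M _ _ Z instZ Y B),
        ∃! H : @EnrichedFunctor M _ _ Z instZ (X × Y) instP,
          @EnrichedFunctor.comp M _ _ Z (X × Y) X instZ instP A H pX = F ∧
          @EnrichedFunctor.comp M _ _ Z (X × Y) Y instZ instP B H pY = G) := by
  refine ⟨⟨EnrichedCategory.punit, fun _ _ => rfl,
    fun Z _ => ⟨default, trivial, fun F _ => Unique.eq_default F⟩⟩,
    ⟨EnrichedCategory.prod, EnrichedFunctor.fst M X Y, EnrichedFunctor.snd M X Y,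
      fun _ _ => rfl, fun Z _ F G => ⟨F.prod' G, ⟨F.prod'_comp_fst G, F.prod'_comp_snd G⟩, ?_⟩⟩⟩
  rintro H ⟨rfl, rfl⟩
  exact (EnrichedFunctor.prod'_comp_fst_comp_snd H).symm
end
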